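/- The function x ↦ (2-x)·K(x) - 2·E(x) is strictly increasing on (0,1), tends to 0 as x → 0⁺, and tends to +∞ as x → 1⁻. -/

import Mathlib

open Real Set Filter

noncomputable def K (x : ℝ) : ℝ :=
  ∫ t in (0 : ℝ)..(π / 2), (1 - x * Real.sin t ^ 2) ^ (-(1/2) : ℝ)

noncomputable def E (x : ℝ) : ℝ :=
  ∫ t in (0 : ℝ)..(π / 2), (1 - x * Real.sin t ^ 2) ^ ((1/2) : ℝ)

/-!
With `u = 1 - x sin² t`, the integrand of `(2 - x) K x - 2 E x` is
`((2 - x) - 2u) / √u = (2 sin² t - 1) ψ_{sin² t}(x)`, where `ψ_a(x) = x / √(1 - a x)`.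
Pairing `t` with `π/2 - t` turns the integral into
`∫₀^{π/4} (1 - 2 sin² t) (ψ_{cos² t}(x) - ψ_{sin² t}(x)) dt`, and for `0 ≤ b < a ≤ 1` the difference
`ψ_a - ψ_b = x² (a - b) / (√(1 - a x) √(1 - b x) (√(1 - a x) + √(1 - b x)))` is strictly
increasing on `[0, 1)`. The integrand is bounded by `x / √(1 - x)`, which gives the limit at `0`.
Near `1`, `E ≤ π/2` while `K` grows like `-log √(1 - x)`.
-/

open MeasureTheory Topology

lemma one_sub_mul_sin_sq_pos {x : ℝ} (hx : x < 1) (t : ℝ) : 0 < 1 - x * sin t ^ 2 := by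
  rcases le_or_gt x 0 with h | h
  · nlinarith [sq_nonneg (sin t)]
  · nlinarith [sin_sq_le_one t]

lemma continuous_one_sub_mul_sin_sq_rpow {x : ℝ} (hx : x < 1) (r : ℝ) :
    Continuous fun t => (1 - x * sin t ^ 2) ^ r :=
  (by fun_prop : Continuous fun t => 1 - x * sin t ^ 2).rpow_const
    fun t => .inl (one_sub_mul_sin_sq_pos hx t).ne'

noncomputable def ψ (a x : ℝ) : ℝ := x / √(1 - x * a)

lemma ψ_sub_ψ {a b x : ℝ} (ha : x * a < 1) (hb : x * b < 1) :
    ψ a x - ψ b x = x ^ 2 * (a - b) /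
      (√(1 - x * a) * √(1 - x * b) * (√(1 - x * a) + √(1 - x * b))) := by
  have hA : 0 < √(1 - x * a) := sqrt_pos.2 (by linarith)
  have hB : 0 < √(1 - x * b) := sqrt_pos.2 (by linarith)
  have hA2 := sq_sqrt (by linarith : 0 ≤ 1 - x * a)
  have hB2 := sq_sqrt (by linarith : 0 ≤ 1 - x * b)
  rw [ψ, ψ, div_sub_div _ _ hA.ne' hB.ne', div_eq_div_iff (by positivity) (by positivity)]
  linear_combination x * √(1 - x * a) * √(1 - x * b) * (hB2 - hA2)

lemma strictMonoOn_ψ_sub_ψ {a b : ℝ} (hb : 0 ≤ b) (hba : b < a) (ha : a ≤ 1) :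
    StrictMonoOn (fun x => ψ a x - ψ b x) (Ico 0 1) := by
  intro x ⟨hx0, hx1⟩ y ⟨hy0, hy1⟩ hxy
  have hxa : x * a < 1 := by nlinarith
  have hxb : x * b < 1 := by nlinarith
  have hya : y * a < 1 := by nlinarith
  have hyb : y * b < 1 := by nlinarith
  have hA : √(1 - y * a) ≤ √(1 - x * a) := sqrt_le_sqrt (by nlinarith)
  have hB : √(1 - y * b) ≤ √(1 - x * b) := sqrt_le_sqrt (by nlinarith)
  have hA0 : 0 < √(1 - y * a) := sqrt_pos.2 (by linarith)
  have hB0 : 0 < √(1 - y * b) := sqrt_pos.2 (by linarith)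
  simp only [ψ_sub_ψ hxa hxb, ψ_sub_ψ hya hyb]
  apply div_lt_div₀ _ (by gcongr) (by nlinarith) (by positivity)
  exact mul_lt_mul_of_pos_right (by nlinarith) (by linarith)

lemma integral_eq_integral_add_reflect {E' : Type*} [NormedAddCommGroup E'] [NormedSpace ℝ E']
    {F : ℝ → E'} {c : ℝ} (hF : IntervalIntegrable F volume 0 (2 * c)) :
    ∫ t in 0..2 * c, F t = ∫ t in 0..c, (F t + F (2 * c - t)) := by
  have hc : c ∈ uIcc 0 (2 * c) := by
    rcases le_total 0 c with h | h
    · exact mem_uIcc.2 (.inl ⟨h, by linarith⟩)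
    · exact mem_uIcc.2 (.inr ⟨by linarith, h⟩)
  have h₁ : IntervalIntegrable F volume 0 c := hF.mono_set (uIcc_subset_uIcc left_mem_uIcc hc)
  have h₂ : IntervalIntegrable F volume c (2 * c) :=
    hF.mono_set (uIcc_subset_uIcc hc right_mem_uIcc)
  have h₂' : IntervalIntegrable (fun t => F (2 * c - t)) volume 0 c := by
    simpa [two_mul] using h₂.symm.comp_sub_left (2 * c)
  rw [intervalIntegral.integral_add h₁ h₂', ← intervalIntegral.integral_add_adjacent_intervals h₁ h₂,
    intervalIntegral.integral_comp_sub_left]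
  congr 2 <;> ring

noncomputable def integrandKE (x t : ℝ) : ℝ := (2 * sin t ^ 2 - 1) * ψ (sin t ^ 2) x

lemma continuous_integrandKE {x : ℝ} (hx : x < 1) : Continuous (integrandKE x) := by
  unfold integrandKE ψ
  exact Continuous.mul (by fun_prop) <| Continuous.div (by fun_prop) (by fun_prop)
    fun t => (sqrt_pos.2 (one_sub_mul_sin_sq_pos hx t)).ne'

lemma sub_mul_rpow_sub_two_mul_rpow {x : ℝ} (hx : x < 1) (t : ℝ) :
    (2 - x) * (1 - x * sin t ^ 2) ^ (-(1/2) : ℝ) - 2 * (1 - x * sin t ^ 2) ^ ((1/2) : ℝ)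
      = integrandKE x t := by
  have hu := one_sub_mul_sin_sq_pos hx t
  have hs : 0 < √(1 - x * sin t ^ 2) := sqrt_pos.2 hu
  rw [rpow_neg hu.le, ← sqrt_eq_rpow, integrandKE, ψ]
  field_simp
  rw [sq_sqrt hu.le]
  ring

lemma sub_mul_K_sub_two_mul_E {x : ℝ} (hx : x < 1) :
    (2 - x) * K x - 2 * E x = ∫ t in 0..π / 2, integrandKE x t := by
  rw [K, E, ← intervalIntegral.integral_const_mul, ← intervalIntegral.integral_const_mul,
    ← intervalIntegral.integral_sub
      (((continuous_one_sub_mul_sin_sq_rpow hx _).intervalIntegrable _ _).const_mul _)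
      (((continuous_one_sub_mul_sin_sq_rpow hx _).intervalIntegrable _ _).const_mul _)]
  exact intervalIntegral.integral_congr fun t _ => sub_mul_rpow_sub_two_mul_rpow hx t

lemma integrandKE_add_integrandKE_pi_div_two_sub (x t : ℝ) :
    integrandKE x t + integrandKE x (π / 2 - t)
      = (1 - 2 * sin t ^ 2) * (ψ (cos t ^ 2) x - ψ (sin t ^ 2) x) := by
  rw [integrandKE, integrandKE, sin_pi_div_two_sub, cos_sq']
  ring

lemma sin_sq_lt_half {t : ℝ} (ht : t ∈ Ioo 0 (π / 4)) : sin t ^ 2 < 1 / 2 := by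
  have : 0 < cos (2 * t) := cos_pos_of_mem_Ioo ⟨by linarith [pi_pos, ht.1], by linarith [ht.2]⟩
  linarith [sin_sq_eq_half_sub t]

lemma strictMonoOn_sub_mul_K_sub_two_mul_E :
    StrictMonoOn (fun x => (2 - x) * K x - 2 * E x) (Ioo 0 1) := by
  intro x hx y hy hxy
  have hpair : ∀ z < 1, (2 - z) * K z - 2 * E z
      = ∫ t in 0..π / 4, (integrandKE z t + integrandKE z (π / 2 - t)) := fun z hz => by
    rw [sub_mul_K_sub_two_mul_E hz, show π / 2 = 2 * (π / 4) by ring,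
      integral_eq_integral_add_reflect ((continuous_integrandKE hz).intervalIntegrable _ _)]
  have hcont : ∀ z < 1, Continuous fun t => integrandKE z t + integrandKE z (π / 2 - t) :=
    fun z hz => (continuous_integrandKE hz).add
      ((continuous_integrandKE hz).comp (continuous_const.sub continuous_id))
  simp only
  rw [← sub_pos, hpair y hy.2, hpair x hx.2, ← intervalIntegral.integral_sub
    ((hcont y hy.2).intervalIntegrable _ _) ((hcont x hx.2).intervalIntegrable _ _)]
  refine intervalIntegral.intervalIntegral_pos_of_pos_on
    (((hcont y hy.2).sub (hcont x hx.2)).intervalIntegrable _ _) (fun t ht => ?_)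
    (by positivity)
  have hs := sin_sq_lt_half ht
  have hmono := strictMonoOn_ψ_sub_ψ (sq_nonneg (sin t)) (by rw [cos_sq']; linarith)
    (cos_sq_le_one t) ⟨hx.1.le, hx.2⟩ ⟨hy.1.le, hy.2⟩ hxy
  simp only [integrandKE_add_integrandKE_pi_div_two_sub, ← mul_sub]
  exact mul_pos (by linarith) (sub_pos.2 hmono)

lemma abs_integrandKE_le {x : ℝ} (hx : x ∈ Ioo 0 1) (t : ℝ) : |integrandKE x t| ≤ x / √(1 - x) := by
  have hs0 := sq_nonneg (sin t)
  have hs1 := sin_sq_le_one t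
  have hden : √(1 - x) ≤ √(1 - x * sin t ^ 2) := sqrt_le_sqrt (by nlinarith [hx.1])
  have hψ : |ψ (sin t ^ 2) x| ≤ x / √(1 - x) := by
    rw [ψ, abs_div, abs_of_pos hx.1, abs_of_nonneg (sqrt_nonneg _)]
    exact div_le_div_of_nonneg_left hx.1.le (sqrt_pos.2 (by linarith [hx.2])) hden
  rw [integrandKE, abs_mul]
  calc |2 * sin t ^ 2 - 1| * |ψ (sin t ^ 2) x| ≤ 1 * (x / √(1 - x)) := by
        gcongr
        rw [abs_le]
        constructor <;> linarith
    _ = x / √(1 - x) := one_mul _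

lemma tendsto_sub_mul_K_sub_two_mul_E_zero :
    Tendsto (fun x => (2 - x) * K x - 2 * E x) (𝓝[Ioo 0 1] 0) (𝓝 0) := by
  refine squeeze_zero_norm' (a := fun x => x / √(1 - x) * (π / 2)) ?_ ?_
  · filter_upwards [self_mem_nhdsWithin] with x hx
    rw [sub_mul_K_sub_two_mul_E hx.2]
    simpa [abs_of_pos pi_div_two_pos] using
      intervalIntegral.norm_integral_le_of_norm_le_const (a := 0) (b := π / 2)
        fun t _ => (norm_eq_abs _).trans_le (abs_integrandKE_le hx t)
  · have : ContinuousAt (fun x => x / √(1 - x) * (π / 2)) 0 :=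
      ContinuousAt.mul (continuousAt_id.div (by fun_prop) (by simp)) continuousAt_const
    simpa using this.tendsto.mono_left nhdsWithin_le_nhds

lemma K_nonneg {x : ℝ} (hx : x < 1) : 0 ≤ K x :=
  intervalIntegral.integral_nonneg (by positivity) fun t _ =>
    rpow_nonneg (one_sub_mul_sin_sq_pos hx t).le _

lemma E_le_pi_div_two {x : ℝ} (hx : x ∈ Ioo 0 1) : E x ≤ π / 2 := by
  have h : ∀ t ∈ Icc 0 (π / 2), (1 - x * sin t ^ 2) ^ ((1/2) : ℝ) ≤ 1 := fun t _ =>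
    rpow_le_one (one_sub_mul_sin_sq_pos hx.2 t).le (by nlinarith [sq_nonneg (sin t), hx.1])
      (by norm_num)
  calc E x ≤ ∫ _ in 0..π / 2, (1 : ℝ) :=
        intervalIntegral.integral_mono_on pi_div_two_pos.le
          ((continuous_one_sub_mul_sin_sq_rpow hx.2 _).intervalIntegrable _ _)
          intervalIntegrable_const h
    _ = π / 2 := by simp

lemma integral_inv_add_sub {ε c : ℝ} (hε : 0 < ε) (hc : 0 ≤ c) :
    ∫ t in 0..c, (ε + (c - t))⁻¹ = log ((ε + c) / ε) := by
  rw [intervalIntegral.integral_comp_sub_left (fun u => (ε + u)⁻¹),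
    intervalIntegral.integral_comp_add_left (fun v => v⁻¹), sub_self, sub_zero, add_zero,
    integral_inv_of_pos hε (by linarith)]

-- `1 - x sin² t = (1 - x) + x cos² t ≤ (√(1 - x) + cos t)²`, and `cos t ≤ π/2 - t`.
lemma sqrt_one_sub_mul_sin_sq_le {x t : ℝ} (hx : x ∈ Ioo 0 1) (ht : t ∈ Icc 0 (π / 2)) :
    √(1 - x * sin t ^ 2) ≤ √(1 - x) + (π / 2 - t) := by
  have hcos : cos t ≤ π / 2 - t := by
    rw [← sin_pi_div_two_sub]
    exact sin_le (by linarith [ht.2])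
  have hcos0 : 0 ≤ cos t := cos_nonneg_of_mem_Icc ⟨by linarith [ht.1, pi_pos], ht.2⟩
  have hsq := sq_sqrt (by linarith [hx.2] : 0 ≤ 1 - x)
  rw [sqrt_le_left (by linarith [sqrt_nonneg (1 - x)])]
  nlinarith [cos_sq' t, sqrt_nonneg (1 - x), hx.1, hx.2]

lemma log_le_K {x : ℝ} (hx : x ∈ Ioo 0 1) :
    log ((√(1 - x) + π / 2) / √(1 - x)) ≤ K x := by
  have hε : 0 < √(1 - x) := sqrt_pos.2 (by linarith [hx.2])
  have hpt : ∀ t ∈ Icc 0 (π / 2),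
      (√(1 - x) + (π / 2 - t))⁻¹ ≤ (1 - x * sin t ^ 2) ^ (-(1/2) : ℝ) := fun t ht => by
    have hu := one_sub_mul_sin_sq_pos hx.2 t
    rw [rpow_neg hu.le, ← sqrt_eq_rpow]
    exact inv_anti₀ (sqrt_pos.2 hu) (sqrt_one_sub_mul_sin_sq_le hx ht)
  have hint : IntervalIntegrable (fun t => (√(1 - x) + (π / 2 - t))⁻¹) volume 0 (π / 2) := by
    refine ContinuousOn.intervalIntegrable (ContinuousOn.inv₀ (by fun_prop) fun t ht => ?_)
    rw [uIcc_of_le pi_div_two_pos.le] at ht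
    linarith [ht.2]
  rw [← integral_inv_add_sub hε pi_div_two_pos.le]
  exact intervalIntegral.integral_mono_on pi_div_two_pos.le hint
    ((continuous_one_sub_mul_sin_sq_rpow hx.2 _).intervalIntegrable _ _) hpt

lemma tendsto_log_add_div_self_atTop {c : ℝ} (hc : 0 < c) :
    Tendsto (fun u => log ((u + c) / u)) (𝓝[>] 0) atTop := by
  refine tendsto_log_atTop.comp (Tendsto.congr' ?_
    (tendsto_atTop_add_const_left _ 1 (tendsto_inv_nhdsGT_zero.const_mul_atTop hc)))
  filter_upwards [self_mem_nhdsWithin] with u (hu : 0 < u)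
  field_simp

lemma tendsto_sqrt_one_sub_nhdsGT_zero :
    Tendsto (fun x => √(1 - x)) (𝓝[Ioo 0 1] 1) (𝓝[>] 0) := by
  refine tendsto_nhdsWithin_of_tendsto_nhds_of_eventually_within _ ?_ ?_
  · have : ContinuousAt (fun x => √(1 - x)) 1 := by fun_prop
    simpa using this.tendsto.mono_left nhdsWithin_le_nhds
  · filter_upwards [self_mem_nhdsWithin] with x hx
    exact sqrt_pos.2 (by linarith [hx.2])

lemma tendsto_sub_mul_K_sub_two_mul_E_one :
    Tendsto (fun x => (2 - x) * K x - 2 * E x) (𝓝[Ioo 0 1] 1) atTop := by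
  refine tendsto_atTop_mono' _ ?_ (tendsto_atTop_add_const_right _ (-π)
    ((tendsto_log_add_div_self_atTop pi_div_two_pos).comp tendsto_sqrt_one_sub_nhdsGT_zero))
  filter_upwards [self_mem_nhdsWithin] with x hx
  have := K_nonneg hx.2
  have : K x ≤ (2 - x) * K x := by nlinarith [hx.2]
  simp only [Function.comp]
  linarith [log_le_K hx, E_le_pi_div_two hx]

theorem stmt2 :
    StrictMonoOn (fun x : ℝ => (2 - x) * K x - 2 * E x) (Ioo 0 1) ∧
    Tendsto (fun x : ℝ => (2 - x) * K x - 2 * E x) (nhdsWithin 0 (Ioo 0 1)) (nhds 0) ∧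
    Tendsto (fun x : ℝ => (2 - x) * K x - 2 * E x) (nhdsWithin 1 (Ioo 0 1)) atTop :=
  ⟨strictMonoOn_sub_mul_K_sub_two_mul_E, tendsto_sub_mul_K_sub_two_mul_E_zero,
    tendsto_sub_mul_K_sub_two_mul_E_one⟩
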